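/- Let all jobs have unit weights (w_j = 1) and positive processing times, with m ≥ 1 shared processors. In every optimal feasible synchronized schedule, every job is executed on some shared processor (no job appears on no shared processor). -/

import Mathlib

/-- Start times on a shared processor for a sequence of processing times `q`:
`Tseq q 0 = 0` and `Tseq q (i+1) = (Tseq q i + q_i)/2`; job `i` (0-indexed)
occupies the shared processor during `(Tseq q i, Tseq q (i+1))`. -/
noncomputable def Tseq (q : List ℝ) : ℕ → ℝ
  | 0 => 0
  | i + 1 => (Tseq q i + q.getD i 0) / 2

/-- A sequence of processing times is feasible on a shared processor if every
job is long enough: `q_i > T_i`. -/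
def ListFeasible (q : List ℝ) : Prop :=
  ∀ i < q.length, Tseq q i < q.getD i 0

/-- Total weighted overlap of one shared processor executing jobs with
processing times `q` and weights `v` (in this order): the overlap of the `i`-th
job is `(q_i - T_i)/2`. -/
noncomputable def listOverlap (q v : List ℝ) : ℝ :=
  ∑ i ∈ Finset.range q.length, v.getD i 0 * (q.getD i 0 - Tseq q i) / 2

/-- A synchronized schedule: each of the `m` shared processors gets a finite
sequence of distinct jobs, and each job appears on at most one shared processor
(jobs appearing nowhere execute on their private processors only). -/
structure SyncSchedule (J : Type) (m : ℕ) where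
  seq : Fin m → List J
  nodup : ∀ i, (seq i).Nodup
  disj : ∀ i i' j, j ∈ seq i → j ∈ seq i' → i = i'

namespace SyncSchedule

variable {J : Type} {m : ℕ}

/-- Feasibility of a synchronized schedule for processing times `p`. -/
def Feasible (p : J → ℝ) (S : SyncSchedule J m) : Prop :=
  ∀ i, ListFeasible ((S.seq i).map p)

/-- Total weighted overlap of a synchronized schedule. -/
noncomputable def Omega (p w : J → ℝ) (S : SyncSchedule J m) : ℝ :=
  ∑ i, listOverlap ((S.seq i).map p) ((S.seq i).map w)

/-- A feasible synchronized schedule is optimal if it maximizes the total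
weighted overlap among all feasible synchronized schedules. -/
def Optimal (p w : J → ℝ) (S : SyncSchedule J m) : Prop :=
  S.Feasible p ∧ ∀ S' : SyncSchedule J m, S'.Feasible p → S'.Omega p w ≤ S.Omega p w

end SyncSchedule

/-!
With unit weights the overlap of job `i` is `(q_i - T_i)/2 = T_{i+1} - T_i`, so the total
overlap of a shared processor telescopes to its final start time `T_k = ∑ q_i / 2^(k-i)`.
Adding an unscheduled job `j` in front of a processor raises this by `p_j / 2^(k+1) > 0`;
sorting the result by processing time raises it further, since a later position weighs a
processing time more, and makes it feasible, since in a nondecreasing sequence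
`T_{i+1} = (T_i + q_i)/2 < q_i ≤ q_{i+1}`.
-/

noncomputable def finalStart (q : List ℝ) : ℝ := Tseq q q.length

theorem Tseq_succ (q : List ℝ) (i : ℕ) : Tseq q (i + 1) = (Tseq q i + q.getD i 0) / 2 := rfl

theorem Tseq_cons_succ (x : ℝ) (q : List ℝ) (i : ℕ) :
    Tseq (x :: q) (i + 1) = Tseq q i + x / 2 ^ (i + 1) := by
  induction i with
  | zero => simp [Tseq]
  | succ i ih =>
    rw [Tseq_succ, ih, List.getD_cons_succ, Tseq_succ]
    ring

theorem finalStart_cons (x : ℝ) (q : List ℝ) :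
    finalStart (x :: q) = finalStart q + x / 2 ^ (q.length + 1) :=
  Tseq_cons_succ x q q.length

theorem listOverlap_replicate_one (q : List ℝ) :
    listOverlap q (List.replicate q.length 1) = finalStart q := by
  have hterm : ∀ i ∈ Finset.range q.length,
      (List.replicate q.length 1).getD i 0 * (q.getD i 0 - Tseq q i) / 2 =
        Tseq q (i + 1) - Tseq q i := by
    intro i hi
    rw [List.getD_replicate _ (Finset.mem_range.1 hi), Tseq_succ]
    ring
  rw [listOverlap, Finset.sum_congr rfl hterm, Finset.sum_range_sub]
  simp [finalStart, Tseq]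

theorem listOverlap_map_one {J : Type} (p : J → ℝ) (l : List J) :
    listOverlap (l.map p) (l.map fun _ => 1) = finalStart (l.map p) := by
  rw [← listOverlap_replicate_one, List.length_map, List.map_const']

theorem listFeasible_of_pairwise_le {q : List ℝ} (hpos : ∀ x ∈ q, 0 < x)
    (hq : q.Pairwise (· ≤ ·)) : ListFeasible q := by
  intro i hi
  induction i with
  | zero =>
    rw [List.getD_eq_getElem _ _ hi]
    exact hpos _ (List.getElem_mem hi)
  | succ i ih =>
    have hi' : i < q.length := Nat.lt_of_succ_lt hi
    have hle : q.getD i 0 ≤ q.getD (i + 1) 0 := by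
      rw [List.getD_eq_getElem _ _ hi', List.getD_eq_getElem _ _ hi]
      exact List.pairwise_iff_getElem.1 hq i (i + 1) hi' hi (Nat.lt_succ_self i)
    rw [Tseq_succ]
    linarith [ih hi']

theorem finalStart_add_le_orderedInsert (x : ℝ) (q : List ℝ) :
    finalStart q + x / 2 ^ (q.length + 1) ≤ finalStart (q.orderedInsert (· ≤ ·) x) := by
  induction q with
  | nil => simp [finalStart_cons]
  | cons b q ih =>
    by_cases hxb : x ≤ b
    · simp [List.orderedInsert, hxb, finalStart_cons]
    · have hpow : (0 : ℝ) < 2 ^ (q.length + 2) := by positivity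
      have hinv : b / 2 ^ (q.length + 2) ≤ x / 2 ^ (q.length + 2) :=
        div_le_div_of_nonneg_right (le_of_not_ge hxb) hpow.le
      have hsplit : ∀ y : ℝ,
          y / 2 ^ (q.length + 1) = y / 2 ^ (q.length + 2) + y / 2 ^ (q.length + 2) := by
        intro y
        field_simp
        ring
      simp only [List.orderedInsert, hxb, if_false, finalStart_cons, List.length_cons,
        List.orderedInsert_length]
      linarith [hsplit x, hsplit b]

theorem finalStart_le_insertionSort (q : List ℝ) :
    finalStart q ≤ finalStart (q.insertionSort (· ≤ ·)) := by
  induction q with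
  | nil => rfl
  | cons x q ih =>
    have hins := finalStart_add_le_orderedInsert x (q.insertionSort (· ≤ ·))
    rw [List.length_insertionSort] at hins
    rw [finalStart_cons, List.insertionSort_cons]
    linarith

theorem finalStart_lt_insertionSort_cons {x : ℝ} (hx : 0 < x) (q : List ℝ) :
    finalStart q < finalStart ((x :: q).insertionSort (· ≤ ·)) := by
  have hgain : finalStart q < finalStart (x :: q) := by
    rw [finalStart_cons]
    have : 0 < x / 2 ^ (q.length + 1) := by positivity
    linarith
  exact hgain.trans_le (finalStart_le_insertionSort _)

namespace SyncSchedule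

variable {J : Type} {m : ℕ}

def replaceSeq (S : SyncSchedule J m) (i₀ : Fin m) (L : List J) (hL : L.Nodup)
    (hfree : ∀ x ∈ L, ∀ i ≠ i₀, x ∉ S.seq i) : SyncSchedule J m where
  seq := Function.update S.seq i₀ L
  nodup i := by
    rcases eq_or_ne i i₀ with rfl | hi
    · simpa using hL
    · simpa [hi] using S.nodup i
  disj i i' x hx hx' := by
    rcases eq_or_ne i i₀ with rfl | hi <;> rcases eq_or_ne i' i with rfl | hi'
    · rfl
    · simp only [Function.update_self, Function.update_of_ne hi'] at hx hx'
      exact absurd hx' (hfree x hx i' hi')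
    · rfl
    · simp only [Function.update_of_ne hi] at hx
      rcases eq_or_ne i' i₀ with rfl | hi₀
      · simp only [Function.update_self] at hx'
        exact absurd hx (hfree x hx' i hi)
      · simp only [Function.update_of_ne hi₀] at hx'
        exact S.disj i i' x hx hx'

variable {p w : J → ℝ} {S : SyncSchedule J m} {i₀ : Fin m} {L : List J} {hL : L.Nodup}
  {hfree : ∀ x ∈ L, ∀ i ≠ i₀, x ∉ S.seq i}

theorem Feasible.replaceSeq (hS : S.Feasible p) (hLp : ListFeasible (L.map p)) :
    (S.replaceSeq i₀ L hL hfree).Feasible p := by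
  intro i
  rcases eq_or_ne i i₀ with rfl | hi
  · simpa [SyncSchedule.replaceSeq] using hLp
  · simpa [SyncSchedule.replaceSeq, hi] using hS i

theorem Omega_lt_replaceSeq
    (hlt : listOverlap ((S.seq i₀).map p) ((S.seq i₀).map w) <
      listOverlap (L.map p) (L.map w)) :
    S.Omega p w < (S.replaceSeq i₀ L hL hfree).Omega p w := by
  refine Finset.sum_lt_sum (fun i _ => ?_)
    ⟨i₀, Finset.mem_univ _, by simpa [replaceSeq] using hlt⟩
  rcases eq_or_ne i i₀ with rfl | hi
  · simpa [replaceSeq] using hlt.le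
  · simp [replaceSeq, hi]

theorem exists_feasible_Omega_one_gt (hS : S.Feasible p) (hp : ∀ j, 0 < p j) (i₀ : Fin m)
    {j : J} (hj : ∀ i, j ∉ S.seq i) :
    ∃ S' : SyncSchedule J m,
      S'.Feasible p ∧ S.Omega p (fun _ => 1) < S'.Omega p (fun _ => 1) := by
  let r : J → J → Prop := fun a b => p a ≤ p b
  let L := (j :: S.seq i₀).insertionSort r
  have hperm : L.Perm (j :: S.seq i₀) := List.perm_insertionSort r _
  have hmap : L.map p = (p j :: (S.seq i₀).map p).insertionSort (· ≤ ·) :=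
    List.map_insertionSort r (· ≤ ·) p _ fun _ _ _ _ => Iff.rfl
  have hL : L.Nodup := hperm.nodup_iff.2 (List.nodup_cons.2 ⟨hj i₀, S.nodup i₀⟩)
  have hfree : ∀ x ∈ L, ∀ i ≠ i₀, x ∉ S.seq i := by
    intro x hx i hi hxi
    rcases List.mem_cons.1 (hperm.mem_iff.1 hx) with rfl | hx₀
    · exact hj i hxi
    · exact hi (S.disj i i₀ x hxi hx₀)
  have hsorted : (L.map p).Pairwise (· ≤ ·) := by
    rw [hmap]
    exact List.pairwise_insertionSort _ _
  have hLp : ListFeasible (L.map p) :=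
    listFeasible_of_pairwise_le (by simpa using fun x _ => hp x) hsorted
  refine ⟨S.replaceSeq i₀ L hL hfree, hS.replaceSeq hLp, Omega_lt_replaceSeq ?_⟩
  rw [listOverlap_map_one, listOverlap_map_one, hmap]
  exact finalStart_lt_insertionSort_cons (hp j) _

end SyncSchedule

theorem every_job_shared_of_optimal_unit_weights_general
    {J : Type} {m : ℕ} (hm : 1 ≤ m)
    (p : J → ℝ) (hp : ∀ j, 0 < p j)
    (S : SyncSchedule J m) (hopt : S.Optimal p (fun _ => 1)) :
    ∀ j : J, ∃ i : Fin m, j ∈ S.seq i := by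
  intro j
  by_contra! hj
  obtain ⟨S', hS', hlt⟩ := SyncSchedule.exists_feasible_Omega_one_gt hopt.1 hp ⟨0, hm⟩ hj
  exact (hopt.2 S' hS').not_gt hlt

/-- With unit weights and positive processing times, in every
optimal feasible synchronized schedule every job is executed on some shared
processor. -/
theorem every_job_shared_of_optimal_unit_weights
    {J : Type} [Fintype J] [DecidableEq J] {m : ℕ} (hm : 1 ≤ m)
    (p : J → ℝ) (hp : ∀ j, 0 < p j)
    (S : SyncSchedule J m) (hopt : S.Optimal p (fun _ => 1)) :
    ∀ j : J, ∃ i : Fin m, j ∈ S.seq i :=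
  every_job_shared_of_optimal_unit_weights_general hm p hp S hopt
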